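/- Fix α > 0 and let v : ℝ → ℝ be smooth, positive and 2π-periodic. Then the total α-Q-curvature equals the total squared α-scalar curvature: ∫₀^{2π} v(θ)·( (α²/9)v''''(θ) + (10α/9)v''(θ) + v(θ) ) dθ = ∫₀^{2π} ( (α/3)v^{1/3}v'' − (2α/9)v^{-2/3}(v')² + v^{4/3} )²·v^{-2/3} dθ. (Equivalently, ∫ Q^α_g dS_g = ∫ (R^α_g)² dS_g for g = v^{-4/3}g_s, with dS_g = v^{-2/3}dθ.) -/

import Mathlib

open Real

private lemma periodic_deriv'' {f : ℝ → ℝ} {c : ℝ} (h : Function.Periodic f c) :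
    Function.Periodic (deriv f) c := by
  intro x
  rw [← deriv_comp_add_const]
  congr 1
  funext y
  exact h y

private lemma periodic_iteratedDeriv {f : ℝ → ℝ} {c : ℝ} (h : Function.Periodic f c) (n : ℕ) :
    Function.Periodic (iteratedDeriv n f) c := by
  induction n with
  | zero => simpa using h
  | succ n ih => rw [iteratedDeriv_succ]; exact periodic_deriv'' ih

private lemma alg_identity (α w a b c d : ℝ) (hw : w ≠ 0) :
    α ^ 2/9 * (a * c + w * d - (b * b + a * c))
      + 4 * α ^ 2/81 * ((3 * a ^ 2 * b * w - a ^ 3 * a) / w ^ 2)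
      + 4 * α/9 * (a * a + w * b)
    = w * (α ^ 2/9 * d + 10 * α/9 * b + w) -
      (α ^ 2/9 * b ^ 2 - 4 * α ^ 2/27 * b * a ^ 2 / w + 4 * α ^ 2/81 * a ^ 4 / w ^ 2
        + 2 * α/3 * w * b - 4 * α/9 * a ^ 2 + w ^ 2) := by
  field_simp
  ring

/-- The total `α`-`Q`-curvature equals the total squared `α`-scalar curvature:
`∫ Q^α_g dS_g = ∫ (R^α_g)² dS_g` for `g = v^{-4/3} g_s`, `dS_g = v^{-2/3} dθ`
(final remark of the paper). -/
theorem total_Q_eq_total_R_sq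
    (α : ℝ) (hα : 0 < α) (v : ℝ → ℝ) (hv : ContDiff ℝ (⊤ : ℕ∞) v) (hpos : ∀ θ, 0 < v θ)
    (hper : Function.Periodic v (2 * π)) :
    (∫ θ in (0:ℝ)..(2 * π),
        v θ * ((α ^ 2/9) * iteratedDeriv 4 v θ + (10 * α/9) * iteratedDeriv 2 v θ + v θ)) =
      ∫ θ in (0:ℝ)..(2 * π),
        ((α/3) * (v θ) ^ ((1 : ℝ)/3) * iteratedDeriv 2 v θ -
            (2 * α/9) * (v θ) ^ ((-2 : ℝ)/3) * (deriv v θ) ^ 2 +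
            (v θ) ^ ((4 : ℝ)/3)) ^ 2 *
          (v θ) ^ ((-2 : ℝ)/3) := by
  have hdiff : ∀ n : ℕ, Differentiable ℝ (iteratedDeriv n v) := fun n =>
    hv.differentiable_iteratedDeriv n (by exact_mod_cast lt_top_iff_ne_top.2 (by simp))
  have hcont : ∀ n : ℕ, Continuous (iteratedDeriv n v) := fun n => (hdiff n).continuous
  have hne : ∀ θ, v θ ≠ 0 := fun θ => (hpos θ).ne'
  have hc0 : Continuous v := hv.continuous
  have hc1 : Continuous (deriv v) := by have := hcont 1; rwa [iteratedDeriv_one] at this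
  -- integrands
  set f : ℝ → ℝ := fun θ =>
    v θ * ((α ^ 2/9) * iteratedDeriv 4 v θ + (10 * α/9) * iteratedDeriv 2 v θ + v θ) with hf
  set g : ℝ → ℝ := fun θ =>
    ((α/3) * (v θ) ^ ((1 : ℝ)/3) * iteratedDeriv 2 v θ -
        (2 * α/9) * (v θ) ^ ((-2 : ℝ)/3) * (deriv v θ) ^ 2 +
        (v θ) ^ ((4 : ℝ)/3)) ^ 2 * (v θ) ^ ((-2 : ℝ)/3) with hg
  -- g in polynomial form
  have hgeq : ∀ θ, g θ =
      (α ^ 2/9) * (iteratedDeriv 2 v θ) ^ 2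
        - (4 * α ^ 2/27) * iteratedDeriv 2 v θ * (deriv v θ) ^ 2 / v θ
        + (4 * α ^ 2/81) * (deriv v θ) ^ 4 / (v θ) ^ 2
        + (2 * α/3) * v θ * iteratedDeriv 2 v θ
        - (4 * α/9) * (deriv v θ) ^ 2 + (v θ) ^ 2 := by
    intro θ
    have hw : (0:ℝ) < v θ := hpos θ
    set t : ℝ := (v θ) ^ ((1:ℝ)/3) with htdef
    have ht : (0:ℝ) < t := rpow_pos_of_pos hw _
    have h3 : t ^ 3 = v θ := by
      rw [htdef, ← rpow_natCast ((v θ) ^ ((1:ℝ)/3)) 3, ← rpow_mul hw.le]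
      norm_num
    have h2m : (v θ) ^ ((-2:ℝ)/3) * t ^ 2 = 1 := by
      rw [htdef, ← rpow_natCast ((v θ) ^ ((1:ℝ)/3)) 2, ← rpow_mul hw.le, ← rpow_add hw]
      norm_num
    have h2 : (v θ) ^ ((-2:ℝ)/3) = 1 / t ^ 2 :=
      (eq_div_iff (pow_ne_zero 2 ht.ne')).mpr h2m
    have h4 : (v θ) ^ ((4:ℝ)/3) = t ^ 4 := by
      rw [htdef, ← rpow_natCast ((v θ) ^ ((1:ℝ)/3)) 4, ← rpow_mul hw.le]
      norm_num
    rw [hg]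
    simp only [h2, h4, ← htdef]
    rw [← h3]
    field_simp
    ring
  -- the antiderivative of f - g
  set F : ℝ → ℝ := fun θ =>
    (α ^ 2/9) * (v θ * iteratedDeriv 3 v θ - deriv v θ * iteratedDeriv 2 v θ)
      + (4 * α ^ 2/81) * ((deriv v θ) ^ 3 / v θ)
      + (4 * α/9) * (v θ * deriv v θ) with hF
  have hFderiv : ∀ θ, HasDerivAt F (f θ - g θ) θ := by
    intro θ
    have h0' : HasDerivAt v (deriv v θ) θ := (hv.differentiable (by simp) θ).hasDerivAt
    have hd : ∀ n : ℕ, HasDerivAt (iteratedDeriv n v) (iteratedDeriv (n+1) v θ) θ := by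
      intro n
      have := (hdiff n θ).hasDerivAt
      rwa [show deriv (iteratedDeriv n v) θ = iteratedDeriv (n+1) v θ by
        rw [iteratedDeriv_succ]] at this
    have h1 : HasDerivAt (deriv v) (iteratedDeriv 2 v θ) θ := by
      have := hd 1; rwa [iteratedDeriv_one] at this
    have hA : HasDerivAt (fun x => v x * iteratedDeriv 3 v x - deriv v x * iteratedDeriv 2 v x)
        (deriv v θ * iteratedDeriv 3 v θ + v θ * iteratedDeriv 4 v θ -
          (iteratedDeriv 2 v θ * iteratedDeriv 2 v θ + deriv v θ * iteratedDeriv 3 v θ)) θ :=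
      (h0'.mul (hd 3)).sub (h1.mul (hd 2))
    have hB : HasDerivAt (fun x => (deriv v x) ^ 3 / v x)
        ((3 * (deriv v θ) ^ 2 * iteratedDeriv 2 v θ * (v θ) - (deriv v θ) ^ 3 * deriv v θ)
          / (v θ) ^ 2) θ := by
      have := (h1.pow 3).div h0' (hne θ)
      refine HasDerivAt.congr_deriv this ?_
      simp only [Pi.pow_apply, Nat.cast_ofNat]
    have hC : HasDerivAt (fun x => v x * deriv v x)
        (deriv v θ * deriv v θ + v θ * iteratedDeriv 2 v θ) θ := h0'.mul h1
    have hsum := ((hA.const_mul (α ^ 2/9)).add (hB.const_mul (4 * α ^ 2/81))).add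
      (hC.const_mul (4 * α/9))
    refine hsum.congr_deriv ?_
    rw [hgeq θ]
    exact alg_identity α (v θ) (deriv v θ) (iteratedDeriv 2 v θ) (iteratedDeriv 3 v θ)
      (iteratedDeriv 4 v θ) (hne θ)
  -- continuity / integrability
  have hfc : Continuous f := by
    rw [hf]
    exact hc0.mul (((continuous_const.mul (hcont 4)).add (continuous_const.mul (hcont 2))).add hc0)
  have hgc : Continuous g := by
    rw [hg]
    have hr : ∀ p : ℝ, Continuous fun θ => (v θ) ^ (p : ℝ) := fun p =>
      hc0.rpow_const (fun x => Or.inl (hne x))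
    exact (((((continuous_const.mul (hr _)).mul (hcont 2)).sub
      ((continuous_const.mul (hr _)).mul (hc1.pow 2))).add (hr _)).pow 2).mul (hr _)
  have hfint : IntervalIntegrable f MeasureTheory.volume 0 (2 * π) :=
    hfc.intervalIntegrable _ _
  have hgint : IntervalIntegrable g MeasureTheory.volume 0 (2 * π) :=
    hgc.intervalIntegrable _ _
  have hsub : (∫ θ in (0:ℝ)..(2 * π), (f θ - g θ)) = F (2 * π) - F 0 :=
    intervalIntegral.integral_eq_sub_of_hasDerivAt (fun θ _ => hFderiv θ)
      ((hfc.sub hgc).intervalIntegrable _ _)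
  have hFper : F (2 * π) = F 0 := by
    have e2 : F (2 * π) = F (0 + 2 * π) := by norm_num
    rw [e2, hF]
    simp only [hper 0, (periodic_deriv'' hper) 0, (periodic_iteratedDeriv hper 2) 0,
      (periodic_iteratedDeriv hper 3) 0]
  have hz : (∫ θ in (0:ℝ)..(2 * π), f θ) - (∫ θ in (0:ℝ)..(2 * π), g θ) = 0 := by
    rw [← intervalIntegral.integral_sub hfint hgint, hsub, hFper, sub_self]
  linarith [hz]
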